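/- (First part of Lemma 2.4.) Let θ ∈ ℚ_p \ {0} and let η be the indicator function of ℤ_p^d (note ℤ_p^d has measure 1, so ‖η‖₂ = 1). For X, Y, Z ∈ ℚ_p^{2d} with Z = (c,ζ), define the Wigner function W_{X,Y}^θ(Z) := ∫_{ℚ_p^d} conj((U_θ(X)η)(z)) · ψ(2θ^{-1}⟨ζ, z − c⟩) · (U_θ(Y)η)(2c − z) dz. Then |W_{X,Y}^θ(Z)| = 1 if Z_θ − (X_θ + Y_θ)/2 ∈ ℤ_p^{2d}, and |W_{X,Y}^θ(Z)| = 0 otherwise, where for X = (x,ξ) one sets X_θ := (x, θ^{-1}ξ). (For odd p, the paper's factor |2|_p^d equals 1 and (½ℤ_p)^d × (½ℤ_p)^d = ℤ_p^{2d}.) -/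

import Mathlib

open MeasureTheory Complex

noncomputable section

variable {p : ℕ} [Fact p.Prime]

/-- Borel measurable structure on the `p`-adic numbers. -/
instance : MeasurableSpace ℚ_[p] := borel _
instance : BorelSpace ℚ_[p] := ⟨rfl⟩

/-- The `p`-adic phase space `ℚ_p^d × ℚ_p^d  (= ℚ_p^{2d})`. -/
abbrev PadicPhase (p : ℕ) [Fact p.Prime] (d : ℕ) : Type :=
  (Fin d → ℚ_[p]) × (Fin d → ℚ_[p])

/-- `μ₀(X) = max {1, max_i |x_i|_p, max_i |ξ_i|_p}` (the Pi-norm is the sup-norm). -/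
def mu0 {d : ℕ} (X : PadicPhase p d) : ℝ := max 1 (max ‖X.1‖ ‖X.2‖)

/-- The standard symplectic form `[X,Y] = ⟨y,ξ⟩ − ⟨x,η⟩` for `X = (x,ξ)`, `Y = (y,η)`. -/
def symp {d : ℕ} (X Y : PadicPhase p d) : ℚ_[p] :=
  (∑ i, Y.1 i * X.2 i) - (∑ i, X.1 i * Y.2 i)

/-- `ψ : ℚ_p → ℂ` is a continuous additive character of modulus one, trivial on `ℤ_p`
but nontrivial on `p⁻¹ℤ_p` (i.e. of conductor `ℤ_p`). -/
structure IsStdChar (p : ℕ) [Fact p.Prime] (ψ : ℚ_[p] → ℂ) : Prop where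
  continuous : Continuous ψ
  map_add : ∀ x y : ℚ_[p], ψ (x + y) = ψ x * ψ y
  norm_one : ∀ x : ℚ_[p], ‖ψ x‖ = 1
  trivial_on_int : ∀ x : ℚ_[p], ‖x‖ ≤ 1 → ψ x = 1
  nontrivial : ∃ x : ℚ_[p], ‖x‖ ≤ (p : ℝ) ∧ ψ x ≠ 1

/-- The Schrödinger representation: `(U_θ(X)φ)(y) = ψ(θ⁻¹⟨ξ, y − x/2⟩) φ(y − x)` for
`X = (x,ξ)`. -/
def schrodinger {p : ℕ} [Fact p.Prime] {d : ℕ} (ψ : ℚ_[p] → ℂ) (θ : ℚ_[p])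
    (X : PadicPhase p d) (φ : (Fin d → ℚ_[p]) → ℂ) (y : Fin d → ℚ_[p]) : ℂ :=
  ψ (θ⁻¹ * ∑ i, X.2 i * (y i - X.1 i / 2)) * φ (y - X.1)

/-- The normalized indicator function of `ℤ_p^d` (it has `L²`-norm one). -/
def unitInd {p : ℕ} [Fact p.Prime] {d : ℕ} : (Fin d → ℚ_[p]) → ℂ :=
  fun y => if ‖y‖ ≤ 1 then 1 else 0

/-- The Wigner function of the pair of coherent states `(U_θ(X)η, U_θ(Y)η)`:
`W_{X,Y}^θ(Z) = ∫ conj((U_θ(X)η)(z)) ψ(2θ⁻¹⟨ζ, z−c⟩) (U_θ(Y)η)(2c−z) dz` for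
`Z = (c,ζ)`. -/
def wigner {p : ℕ} [Fact p.Prime] {d : ℕ} (ν : Measure (Fin d → ℚ_[p]))
    (ψ : ℚ_[p] → ℂ) (θ : ℚ_[p]) (X Y Z : PadicPhase p d) : ℂ :=
  ∫ z, (starRingEnd ℂ) (schrodinger ψ θ X unitInd z) *
      ψ (2 * θ⁻¹ * ∑ i, Z.2 i * (z i - Z.1 i)) *
      schrodinger ψ θ Y unitInd (fun i => 2 * Z.1 i - z i) ∂ν

/-- The rescaling `X = (x,ξ) ↦ X_θ = (x, θ⁻¹ξ)`. -/
def thetaScale {p : ℕ} [Fact p.Prime] {d : ℕ} (θ : ℚ_[p]) (X : PadicPhase p d) :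
    PadicPhase p d := (X.1, θ⁻¹ • X.2)


/-! The integrand of `W_{X,Y}^θ(Z)` is supported on `(x + ℤ_p^d) ∩ (2c - y - ℤ_p^d)`. By the
ultrametric inequality this intersection is empty unless `2c - x - y ∈ ℤ_p^d`, and is then the
whole ball `x + ℤ_p^d`. On that ball the phase is `ψ` of an affine function of `z` with linear part
`⟨θ⁻¹(2ζ - ξ - η), z⟩`, and a character integrated over `ℤ_p^d` gives `1` or `0` according as it
is trivial on `ℤ_p^d` or not (translate by a point where it is nontrivial). Since `|2|_p = 1`,
both conditions together say `Z_θ - (X_θ + Y_θ)/2 ∈ ℤ_p^{2d}`. -/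

theorem Padic.norm_two_of_odd (hp : Odd p) : ‖(2 : ℚ_[p])‖ = 1 := by
  exact_mod_cast Padic.norm_natCast_eq_one_iff.mpr (Nat.coprime_two_right.mpr hp)

theorem norm_add_le_iff_of_norm_le {E : Type*} [SeminormedAddGroup E] [IsUltrametricDist E]
    {x y : E} {r : ℝ} (hy : ‖y‖ ≤ r) : ‖x + y‖ ≤ r ↔ ‖x‖ ≤ r :=
  ⟨fun h => by
    simpa using (IsUltrametricDist.norm_add_le_max (x + y) (-y)).trans (max_le h (by simpa)),
    fun h => (IsUltrametricDist.norm_add_le_max x y).trans (max_le h hy)⟩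

theorem integral_eq_zero_of_add_right_eq_mul {G 𝕜 : Type*} [MeasurableSpace G] [AddGroup G]
    [MeasurableAdd G] [RCLike 𝕜] (μ : Measure G) [μ.IsAddRightInvariant] {f : G → 𝕜} {g : G}
    {c : 𝕜} (hc : c ≠ 1) (hf : ∀ x, f (x + g) = c * f x) : ∫ x, f x ∂μ = 0 := by
  have h := integral_add_right_eq_self (μ := μ) f g
  simp only [hf, integral_const_mul] at h
  by_contra h0
  exact hc ((mul_eq_right₀ h0).mp h)

section Wigner

variable {ψ : ℚ_[p] → ℂ} {d : ℕ}

namespace IsStdChar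

theorem map_zero (hψ : IsStdChar p ψ) : ψ 0 = 1 :=
  hψ.trivial_on_int 0 (by simp)

theorem map_neg (hψ : IsStdChar p ψ) (a : ℚ_[p]) : ψ (-a) = starRingEnd ℂ (ψ a) := by
  rw [← Complex.inv_eq_conj (hψ.norm_one a)]
  exact eq_inv_of_mul_eq_one_left (by rw [← hψ.map_add, neg_add_cancel, hψ.map_zero])

theorem exists_ne_one_of_not_norm_le_one (hψ : IsStdChar p ψ)
    {w : Fin d → ℚ_[p]} (hw : ¬ ‖w‖ ≤ 1) :
    ∃ u₀ : Fin d → ℚ_[p], ‖u₀‖ ≤ 1 ∧ ψ (∑ i, w i * u₀ i) ≠ 1 := by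
  obtain ⟨i, hi⟩ : ∃ i, ¬ ‖w i‖ ≤ 1 := by simpa [pi_norm_le_iff_of_nonneg] using hw
  obtain ⟨x₀, hx₀, hψx₀⟩ := hψ.nontrivial
  -- `‖·‖` takes values in `p ^ ℤ`, so there is no norm strictly between `1` and `p`.
  have hp_le : (p : ℝ) ≤ ‖w i‖ := by
    simpa using mt (Padic.norm_le_pow_iff_norm_lt_pow_add_one (w i) 0).mpr hi
  have hwi : w i ≠ 0 := by rintro h; simp [h] at hi
  refine ⟨Pi.single i (x₀ / w i), ?_, ?_⟩
  · rw [Pi.norm_single, norm_div, div_le_one (norm_pos_iff.mpr hwi)]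
    exact hx₀.trans hp_le
  · change ψ (w ⬝ᵥ Pi.single i (x₀ / w i)) ≠ 1
    rwa [dotProduct_single, mul_div_cancel₀ _ hwi]

theorem integral_unitBall (hψ : IsStdChar p ψ)
    (ν : Measure (Fin d → ℚ_[p])) [ν.IsAddRightInvariant] (w : Fin d → ℚ_[p]) :
    ∫ u, (if ‖u‖ ≤ 1 then ψ (∑ i, w i * u i) else 0) ∂ν =
      if ‖w‖ ≤ 1 then (ν.real {u | ‖u‖ ≤ 1} : ℂ) else 0 := by
  split_ifs with hw
  · have h_ind : ∀ u : Fin d → ℚ_[p], (if ‖u‖ ≤ 1 then ψ (∑ i, w i * u i) else 0) =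
        {u : Fin d → ℚ_[p] | ‖u‖ ≤ 1}.indicator (fun _ => 1) u := by
      intro u
      by_cases hu : ‖u‖ ≤ 1
      · refine (if_pos hu).trans ((hψ.trivial_on_int _ ?_).trans (by simp [hu]))
        refine IsUltrametricDist.norm_sum_le_of_forall_le_of_nonneg zero_le_one fun i _ => ?_
        rw [norm_mul]
        exact mul_le_one₀ ((norm_le_pi_norm w i).trans hw) (norm_nonneg _)
          ((norm_le_pi_norm u i).trans hu)
      · simp [hu]
    have h_meas : MeasurableSet {u : Fin d → ℚ_[p] | ‖u‖ ≤ 1} :=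
      measurableSet_le measurable_norm measurable_const
    simp_rw [h_ind]
    rw [integral_indicator_const _ h_meas, Complex.real_smul, mul_one]
  · obtain ⟨u₀, hu₀, hψu₀⟩ := hψ.exists_ne_one_of_not_norm_le_one hw
    refine integral_eq_zero_of_add_right_eq_mul ν (g := u₀) hψu₀ fun u => ?_
    simp only [norm_add_le_iff_of_norm_le hu₀, Pi.add_apply, mul_add, Finset.sum_add_distrib,
      hψ.map_add]
    split_ifs <;> ring

end IsStdChar

theorem exists_wigner_eq_mul_integral (hψ : IsStdChar p ψ)
    (ν : Measure (Fin d → ℚ_[p])) [ν.IsAddRightInvariant] (θ : ℚ_[p])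
    (X Y Z : PadicPhase p d) :
    ∃ a : ℚ_[p], wigner ν ψ θ X Y Z = ψ a * ∫ u,
      (if ‖u‖ ≤ 1 ∧ ‖(2 : ℚ_[p]) • Z.1 - X.1 - Y.1 - u‖ ≤ 1 then
        ψ (∑ i, (θ⁻¹ • ((2 : ℚ_[p]) • Z.2 - X.2 - Y.2)) i * u i) else 0) ∂ν := by
  -- `a` is the phase at `u = 0`; the phase is affine in `u`.
  refine ⟨θ⁻¹ * ∑ i, (2 * Z.2 i * (X.1 i - Z.1 i) + Y.2 i * (2 * Z.1 i - X.1 i - Y.1 i / 2)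
    - X.2 i * X.1 i / 2), ?_⟩
  rw [wigner, ← integral_add_right_eq_self _ X.1, ← integral_const_mul]
  congr 1
  funext u
  have h_mirror : (fun i => 2 * Z.1 i - (u + X.1) i) - Y.1 =
      (2 : ℚ_[p]) • Z.1 - X.1 - Y.1 - u := by
    funext i; simp only [Pi.sub_apply, Pi.add_apply, Pi.smul_apply, smul_eq_mul]; ring
  simp only [schrodinger, unitInd, add_sub_cancel_right, h_mirror]
  split_ifs with hX hY hXY
  · rw [mul_one, mul_one, ← hψ.map_neg, ← hψ.map_add, ← hψ.map_add, ← hψ.map_add]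
    congr 1
    simp only [Finset.mul_sum, ← Finset.sum_neg_distrib, ← Finset.sum_add_distrib]
    refine Finset.sum_congr rfl fun i _ => ?_
    simp only [Pi.add_apply, Pi.smul_apply, Pi.sub_apply, smul_eq_mul]
    ring
  all_goals simp_all

theorem norm_wigner (hψ : IsStdChar p ψ)
    (ν : Measure (Fin d → ℚ_[p])) [ν.IsAddRightInvariant] (θ : ℚ_[p])
    (X Y Z : PadicPhase p d) :
    ‖wigner ν ψ θ X Y Z‖ =
      if ‖(2 : ℚ_[p]) • Z.1 - X.1 - Y.1‖ ≤ 1 ∧ ‖θ⁻¹ • ((2 : ℚ_[p]) • Z.2 - X.2 - Y.2)‖ ≤ 1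
      then ν.real {u | ‖u‖ ≤ 1} else 0 := by
  obtain ⟨a, ha⟩ := exists_wigner_eq_mul_integral hψ ν θ X Y Z
  have h_support : ∀ u : Fin d → ℚ_[p],
      (‖u‖ ≤ 1 ∧ ‖(2 : ℚ_[p]) • Z.1 - X.1 - Y.1 - u‖ ≤ 1) ↔
        (‖(2 : ℚ_[p]) • Z.1 - X.1 - Y.1‖ ≤ 1 ∧ ‖u‖ ≤ 1) := fun u =>
    (and_congr_right fun hu => by
      rw [sub_eq_add_neg _ u, norm_add_le_iff_of_norm_le (by rwa [norm_neg])]).trans and_comm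
  simp_rw [ha, norm_mul, hψ.norm_one, one_mul, h_support, ite_and]
  split_ifs with hv hw
  · rw [hψ.integral_unitBall, if_pos hw, Complex.norm_real,
      Real.norm_of_nonneg measureReal_nonneg]
  · rw [hψ.integral_unitBall, if_neg hw, norm_zero]
  · rw [integral_zero, norm_zero]

theorem thetaScale_sub_midpoint (θ : ℚ_[p]) (X Y Z : PadicPhase p d) :
    thetaScale θ Z - (2 : ℚ_[p])⁻¹ • (thetaScale θ X + thetaScale θ Y) =
      (2 : ℚ_[p])⁻¹ • ((2 : ℚ_[p]) • Z.1 - X.1 - Y.1, θ⁻¹ • ((2 : ℚ_[p]) • Z.2 - X.2 - Y.2)) := by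
  ext i <;> simp [thetaScale] <;> ring

end Wigner

theorem wigner_abs_general {p : ℕ} [Fact p.Prime] (hp : Odd p)
    {d : ℕ}
    (ν : Measure (Fin d → ℚ_[p])) [ν.IsAddHaarMeasure]
    (hν : ν {x : Fin d → ℚ_[p] | ‖x‖ ≤ 1} = 1)
    (ψ : ℚ_[p] → ℂ) (hψ : IsStdChar p ψ)
    (θ : ℚ_[p])
    (X Y Z : PadicPhase p d) :
    ((thetaScale θ Z - (2 : ℚ_[p])⁻¹ • (thetaScale θ X + thetaScale θ Y)) ∈
        {T : PadicPhase p d | ‖T.1‖ ≤ 1 ∧ ‖T.2‖ ≤ 1} →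
      ‖wigner ν ψ θ X Y Z‖ = 1) ∧
    ((thetaScale θ Z - (2 : ℚ_[p])⁻¹ • (thetaScale θ X + thetaScale θ Y)) ∉
        {T : PadicPhase p d | ‖T.1‖ ≤ 1 ∧ ‖T.2‖ ≤ 1} →
      ‖wigner ν ψ θ X Y Z‖ = 0) := by
  rw [norm_wigner hψ ν, thetaScale_sub_midpoint, Measure.real, hν, ENNReal.toReal_one]
  simp only [Set.mem_ofPred_eq, Prod.smul_fst, Prod.smul_snd, norm_smul, norm_inv,
    Padic.norm_two_of_odd hp, inv_one, one_mul]
  exact ⟨fun h => if_pos h, fun h => if_neg h⟩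

/-- First part of Lemma 2.4: `|W_{X,Y}^θ(Z)| = 1` if `Z_θ − (X_θ + Y_θ)/2 ∈ ℤ_p^{2d}`
and `|W_{X,Y}^θ(Z)| = 0` otherwise. -/
theorem wigner_abs {p : ℕ} [Fact p.Prime] (hp : Odd p)
    {d : ℕ} (hd : 1 ≤ d)
    (ν : Measure (Fin d → ℚ_[p])) [ν.IsAddHaarMeasure]
    (hν : ν {x : Fin d → ℚ_[p] | ‖x‖ ≤ 1} = 1)
    (ψ : ℚ_[p] → ℂ) (hψ : IsStdChar p ψ)
    (θ : ℚ_[p]) (hθ : θ ≠ 0)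
    (X Y Z : PadicPhase p d) :
    ((thetaScale θ Z - (2 : ℚ_[p])⁻¹ • (thetaScale θ X + thetaScale θ Y)) ∈
        {T : PadicPhase p d | ‖T.1‖ ≤ 1 ∧ ‖T.2‖ ≤ 1} →
      ‖wigner ν ψ θ X Y Z‖ = 1) ∧
    ((thetaScale θ Z - (2 : ℚ_[p])⁻¹ • (thetaScale θ X + thetaScale θ Y)) ∉
        {T : PadicPhase p d | ‖T.1‖ ≤ 1 ∧ ‖T.2‖ ≤ 1} →
      ‖wigner ν ψ θ X Y Z‖ = 0) :=
  wigner_abs_general hp ν hν ψ hψ θ X Y Z
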